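/- Let ρ be a state on H_{A₁} ⊗ ⋯ ⊗ H_{A_l} and suppose there exist states σ_i on H_{A_i} (i = 1,…,l) with ‖ρ − σ₁ ⊗ ⋯ ⊗ σ_l‖₁ ≤ α. Then ‖ρ − ρ_{A₁} ⊗ ⋯ ⊗ ρ_{A_l}‖₁ ≤ (l+1)α, where ρ_{A_i} denotes the reduced state of ρ on H_{A_i} obtained by taking the partial trace over all other tensor factors. -/

import Mathlib

/-!
Partial traces do not increase the trace norm, and the marginals of `σ₁ ⊗ ⋯ ⊗ σ_l` are the
`σ_i`; hence `‖σ_i - ρ_{A_i}‖₁ ≤ α` for every `i`. Tensoring a Hermitian `D` with states does not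
increase `‖D‖₁`, so exchanging the factors `σ_i` for `ρ_{A_i}` one at a time costs at most `l α`,
and the triangle inequality adds the remaining `α`. The trace-norm estimates for Hermitian `X`
all come from the duality `‖X‖₁ = max {Re tr (S X) : -1 ≤ S ≤ 1}`, with the maximum attained
at the sign of `X`.
-/

open scoped Kronecker ComplexOrder
open Matrix

/-- The trace norm (Schatten 1-norm) of a complex matrix: `Tr √(Xᴴ X)`. -/
noncomputable def traceNorm {n : Type*} [Fintype n] [DecidableEq n] (X : Matrix n n ℂ) : ℝ :=
  (((Matrix.posSemidef_conjTranspose_mul_self X).1.eigenvectorUnitary : Matrix n n ℂ) *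
      Matrix.diagonal (((↑) : ℝ → ℂ) ∘ Real.sqrt ∘ (Matrix.posSemidef_conjTranspose_mul_self X).1.eigenvalues) *
      (star (Matrix.posSemidef_conjTranspose_mul_self X).1.eigenvectorUnitary : Matrix n n ℂ)).trace.re

/-- A quantum state: a positive semidefinite matrix with unit trace. -/
def IsState {n : Type*} [Fintype n] (ρ : Matrix n n ℂ) : Prop :=
  ρ.PosSemidef ∧ ρ.trace = 1

/-- The tensor product `N 0 ⊗ ⋯ ⊗ N (l-1)` of a family of square matrices, acting on
the tensor product space indexed by dependent functions. -/
def tensorFamily {l : ℕ} {A : Fin l → Type*}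
    (N : ∀ i, Matrix (A i) (A i) ℂ) : Matrix (∀ i, A i) (∀ i, A i) ℂ :=
  Matrix.of fun x y => ∏ i, N i (x i) (y i)

/-- A multipartite separable state across the cut `A₁ : ⋯ : A_l`: a finite convex
combination of tensor products of states. -/
def SeparableFamilyState {l : ℕ} {A : Fin l → Type*} [∀ i, Fintype (A i)]
    (σ : Matrix (∀ i, A i) (∀ i, A i) ℂ) : Prop :=
  ∃ (m : ℕ) (p : Fin m → ℝ) (τ : ∀ _ : Fin m, ∀ i, Matrix (A i) (A i) ℂ),
    (∀ y, 0 ≤ p y) ∧ (∑ y, p y = 1) ∧ (∀ y i, IsState (τ y i)) ∧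
    σ = ∑ y, (p y : ℂ) • tensorFamily (τ y)

/-- Insert a value at coordinate `i₀` into an assignment of the remaining coordinates. -/
def insertAt {l : ℕ} {A : Fin l → Type*} (i₀ : Fin l) (a : A i₀)
    (w : ∀ j : {j : Fin l // j ≠ i₀}, A j.1) : ∀ j, A j :=
  fun j => if h : j = i₀ then cast (congrArg A h).symm a else w ⟨j, h⟩

/-- Partial trace of a multipartite operator onto the `i₀`-th tensor factor
(tracing out all other factors). -/
noncomputable def ptraceAt {l : ℕ} {A : Fin l → Type*} [∀ i, Fintype (A i)]
    [∀ i, DecidableEq (A i)] (i₀ : Fin l)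
    (X : Matrix (∀ j, A j) (∀ j, A j) ℂ) : Matrix (A i₀) (A i₀) ℂ :=
  Matrix.of fun a a' =>
    ∑ w : ∀ j : {j : Fin l // j ≠ i₀}, A j.1, X (insertAt i₀ a w) (insertAt i₀ a' w)

/-- The multipartite one-way LOCC norm of an operator on `H_{A₁} ⊗ ⋯ ⊗ H_{A_l}`,
with distinguished (receiving) party `i₀`: the supremum over finite POVMs
`{Λ^{(i)}_{m_i}}` on each `H_{A_i}`, `i ≠ i₀`, of
`Σ_{m} ‖Tr_{rest}((I_{A_{i₀}} ⊗ ⊗_{i ≠ i₀} Λ^{(i)}_{m_i}) X)‖₁`. -/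
noncomputable def oneWayLOCCNormFam {l : ℕ} {A : Fin l → Type*} [∀ i, Fintype (A i)]
    [∀ i, DecidableEq (A i)] (i₀ : Fin l)
    (X : Matrix (∀ i, A i) (∀ i, A i) ℂ) : ℝ :=
  sSup { r : ℝ | ∃ (M : Fin l → ℕ) (Λ : ∀ i, Fin (M i) → Matrix (A i) (A i) ℂ),
    M i₀ = 1 ∧ (∀ m, Λ i₀ m = 1) ∧
    (∀ i, i ≠ i₀ → ∀ m, (Λ i m).PosSemidef) ∧
    (∀ i, i ≠ i₀ → ∑ m, Λ i m = 1) ∧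
    r = ∑ m : ∀ i, Fin (M i),
      traceNorm (ptraceAt i₀ (tensorFamily (fun i => Λ i (m i)) * X)) }

/-- `k`-extendibility of a multipartite state `ρ` on `H_{A₁} ⊗ ⋯ ⊗ H_{A_l}` (with
respect to the cut `A₁ : ⋯ : A_l`): there is a state `ω` on `⊗_i H_{A_i}^{⊗k}`
invariant under every permutation of the `k` copies within each group, whose partial
trace over all but the first copy in each group equals `ρ`. -/
def KExtendible {l : ℕ} {A : Fin l → Type*} [∀ i, Fintype (A i)]
    (k : ℕ) (hk : 0 < k) (ρ : Matrix (∀ i, A i) (∀ i, A i) ℂ) : Prop :=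
  ∃ ω : Matrix (∀ i, Fin k → A i) (∀ i, Fin k → A i) ℂ,
    IsState ω ∧
    (∀ π : ∀ _ : Fin l, Equiv.Perm (Fin k), ∀ x y : ∀ i, Fin k → A i,
      ω (fun i j => x i (π i j)) (fun i j => y i (π i j)) = ω x y) ∧
    (∀ x y : ∀ i, A i, ρ x y =
      ∑ w : ∀ i : Fin l, {j : Fin k // j ≠ ⟨0, hk⟩} → A i,
        ω (fun i j => if h : j = ⟨0, hk⟩ then x i else w i ⟨j, h⟩)
          (fun i j => if h : j = ⟨0, hk⟩ then y i else w i ⟨j, h⟩))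

open scoped MatrixOrder

section TraceNorm

variable {n : Type*} [Fintype n] [DecidableEq n]

lemma traceNorm_eq_re_trace_cfc_sqrt (X : Matrix n n ℂ) :
    traceNorm X = (cfc Real.sqrt (Xᴴ * X)).trace.re := by
  rw [(posSemidef_conjTranspose_mul_self X).1.cfc_eq, IsHermitian.cfc,
    Unitary.conjStarAlgAut_apply]
  rfl

lemma traceNorm_neg (X : Matrix n n ℂ) : traceNorm (-X) = traceNorm X := by
  have h : (-X)ᴴ * -X = Xᴴ * X := by rw [conjTranspose_neg, neg_mul_neg]
  rw [traceNorm_eq_re_trace_cfc_sqrt, traceNorm_eq_re_trace_cfc_sqrt, h]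

lemma Matrix.IsHermitian.traceNorm_eq {X : Matrix n n ℂ} (hX : X.IsHermitian) :
    traceNorm X = (cfc (|·| : ℝ → ℝ) X).trace.re := by
  have hsq : Xᴴ * X = cfc (· ^ 2 : ℝ → ℝ) X := by rw [hX.eq, cfc_pow_id X 2, sq]
  rw [traceNorm_eq_re_trace_cfc_sqrt, hsq, ← cfc_comp' Real.sqrt (· ^ 2) X]
  exact congrArg (fun M : Matrix n n ℂ => M.trace.re)
    (cfc_congr fun t _ => Real.sqrt_sq_eq_abs t)

lemma Matrix.PosSemidef.traceNorm_eq {P : Matrix n n ℂ} (hP : P.PosSemidef) :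
    traceNorm P = P.trace.re := by
  rw [IsHermitian.traceNorm_eq hP.1, cfc_congr (g := fun t => t) fun t ht => abs_of_nonneg
    (spectrum_nonneg_of_nonneg hP.nonneg ht), cfc_id' ℝ P]

lemma traceNorm_zero : traceNorm (0 : Matrix n n ℂ) = 0 := by
  simp [PosSemidef.zero.traceNorm_eq]

lemma Matrix.PosSemidef.re_trace_mul_nonneg {P Q : Matrix n n ℂ} (hP : P.PosSemidef)
    (hQ : Q.PosSemidef) : 0 ≤ (P * Q).trace.re := by
  obtain ⟨B, rfl⟩ := CStarAlgebra.nonneg_iff_eq_star_mul_self.mp hP.nonneg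
  rw [star_eq_conjTranspose, ← trace_mul_cycle]
  exact (Complex.le_def.mp (hQ.mul_mul_conjTranspose_same B).trace_nonneg).1

lemma Matrix.IsHermitian.exists_posSemidef_sub {X : Matrix n n ℂ} (hX : X.IsHermitian) :
    ∃ P Q : Matrix n n ℂ, P.PosSemidef ∧ Q.PosSemidef ∧ X = P - Q ∧
      traceNorm X = P.trace.re + Q.trace.re := by
  refine ⟨cfc (fun t : ℝ => max t 0) X, cfc (fun t : ℝ => max (-t) 0) X,
    (cfc_nonneg fun t _ => le_max_right _ _).posSemidef,
    (cfc_nonneg fun t _ => le_max_right _ _).posSemidef, ?_, ?_⟩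
  · rw [← cfc_sub (fun t : ℝ => max t 0) (fun t : ℝ => max (-t) 0) X,
      cfc_congr (g := id) fun t _ => max_zero_sub_max_neg_zero_eq_self t, cfc_id ℝ X]
  · rw [hX.traceNorm_eq, ← Complex.add_re, ← trace_add,
      ← cfc_add (a := X) (fun t : ℝ => max t 0) (fun t : ℝ => max (-t) 0),
      cfc_congr fun t _ => (max_zero_add_max_neg_zero_eq_abs_self t).symm]

lemma Matrix.IsHermitian.re_trace_mul_le_traceNorm {X S : Matrix n n ℂ} (hX : X.IsHermitian)
    (hS₁ : (1 - S).PosSemidef) (hS₂ : (1 + S).PosSemidef) :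
    (S * X).trace.re ≤ traceNorm X := by
  obtain ⟨P, Q, hP, hQ, rfl, hnorm⟩ := hX.exists_posSemidef_sub
  have hSP := hS₁.re_trace_mul_nonneg hP
  have hSQ := hS₂.re_trace_mul_nonneg hQ
  simp only [sub_mul, add_mul, one_mul, trace_sub, trace_add, Complex.sub_re,
    Complex.add_re] at hSP hSQ
  rw [hnorm, mul_sub, trace_sub, Complex.sub_re]
  linarith

lemma Matrix.IsHermitian.exists_re_trace_mul_eq_traceNorm {X : Matrix n n ℂ}
    (hX : X.IsHermitian) :
    ∃ S : Matrix n n ℂ, (1 - S).PosSemidef ∧ (1 + S).PosSemidef ∧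
      (S * X).trace.re = traceNorm X := by
  set sgn : ℝ → ℝ := fun t => if 0 ≤ t then 1 else -1
  have hsgn : ContinuousOn sgn (spectrum ℝ X) := (Set.toFinite _).continuousOn sgn
  refine ⟨cfc sgn X, ?_, ?_, ?_⟩
  · rw [← cfc_const_one ℝ X, ← cfc_sub _ _ X (hg := hsgn)]
    exact (cfc_nonneg fun t _ => by simp only [sgn]; split_ifs <;> norm_num).posSemidef
  · rw [← cfc_const_one ℝ X, ← cfc_add _ _ (hg := hsgn)]
    exact (cfc_nonneg fun t _ => by simp only [sgn]; split_ifs <;> norm_num).posSemidef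
  · nth_rw 2 [← cfc_id' ℝ X]
    rw [← cfc_mul _ _ X hsgn, hX.traceNorm_eq, cfc_congr fun t _ => ?_]
    simp only [sgn]
    split_ifs with h
    · rw [one_mul, abs_of_nonneg h]
    · rw [neg_one_mul, abs_of_neg (not_le.mp h)]

lemma Matrix.IsHermitian.traceNorm_add_le {X Y : Matrix n n ℂ} (hX : X.IsHermitian)
    (hY : Y.IsHermitian) : traceNorm (X + Y) ≤ traceNorm X + traceNorm Y := by
  obtain ⟨S, hS₁, hS₂, hS⟩ := (hX.add hY).exists_re_trace_mul_eq_traceNorm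
  rw [← hS, mul_add, trace_add, Complex.add_re]
  exact add_le_add (hX.re_trace_mul_le_traceNorm hS₁ hS₂)
    (hY.re_trace_mul_le_traceNorm hS₁ hS₂)

end TraceNorm

section TensorFamily

variable {l : ℕ} {A : Fin l → Type*}

lemma tensorFamily_conjTranspose (N : ∀ i, Matrix (A i) (A i) ℂ) :
    (tensorFamily N)ᴴ = tensorFamily fun i => (N i)ᴴ := by
  ext x y
  simp [tensorFamily, conjTranspose_apply, star_prod]

lemma tensorFamily_one [∀ i, DecidableEq (A i)] :
    tensorFamily (1 : ∀ i, Matrix (A i) (A i) ℂ) = 1 := by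
  ext x y
  simp only [tensorFamily, of_apply, Pi.one_apply, one_apply, Finset.prod_boole,
    Finset.mem_univ, forall_const, funext_iff]

lemma tensorFamily_update_apply (N : ∀ i, Matrix (A i) (A i) ℂ) (i : Fin l)
    (D : Matrix (A i) (A i) ℂ) (x y : ∀ j, A j) :
    tensorFamily (Function.update N i D) x y =
      D (x i) (y i) * ∏ j : {j // j ≠ i}, N j (x j) (y j) := by
  rw [tensorFamily, of_apply, Fintype.prod_eq_mul_prod_subtype_ne _ i, Function.update_self]
  congr 1
  exact Finset.prod_congr rfl fun j _ => by rw [Function.update_of_ne j.2]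

lemma tensorFamily_update_add (N : ∀ i, Matrix (A i) (A i) ℂ) (i : Fin l)
    (C D : Matrix (A i) (A i) ℂ) :
    tensorFamily (Function.update N i (C + D)) =
      tensorFamily (Function.update N i C) + tensorFamily (Function.update N i D) := by
  ext x y
  simp only [Matrix.add_apply, tensorFamily_update_apply, add_mul]

lemma tensorFamily_update_sub (N : ∀ i, Matrix (A i) (A i) ℂ) (i : Fin l)
    (C D : Matrix (A i) (A i) ℂ) :
    tensorFamily (Function.update N i (C - D)) =
      tensorFamily (Function.update N i C) - tensorFamily (Function.update N i D) := by
  ext x y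
  simp only [Matrix.sub_apply, tensorFamily_update_apply, sub_mul]

variable [∀ i, Fintype (A i)]

lemma tensorFamily_mul (M N : ∀ i, Matrix (A i) (A i) ℂ) :
    tensorFamily M * tensorFamily N = tensorFamily fun i => M i * N i := by
  ext x y
  simp only [mul_apply, tensorFamily, of_apply, Finset.prod_univ_sum, Fintype.piFinset_univ,
    Finset.prod_mul_distrib]

lemma trace_tensorFamily (N : ∀ i, Matrix (A i) (A i) ℂ) :
    (tensorFamily N).trace = ∏ i, (N i).trace := by
  simp only [trace, diag_apply, tensorFamily, of_apply, Finset.prod_univ_sum,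
    Fintype.piFinset_univ]

variable [∀ i, DecidableEq (A i)]

lemma posSemidef_tensorFamily {N : ∀ i, Matrix (A i) (A i) ℂ}
    (hN : ∀ i, (N i).PosSemidef) : (tensorFamily N).PosSemidef := by
  choose B hB using fun i => CStarAlgebra.nonneg_iff_eq_star_mul_self.mp (hN i).nonneg
  have : tensorFamily N = (tensorFamily B)ᴴ * tensorFamily B := by
    rw [tensorFamily_conjTranspose, tensorFamily_mul]
    exact congrArg _ (funext hB)
  exact this ▸ posSemidef_conjTranspose_mul_self _

lemma posSemidef_tensorFamily_update {N : ∀ i, Matrix (A i) (A i) ℂ}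
    (hN : ∀ i, (N i).PosSemidef) (i : Fin l) {E : Matrix (A i) (A i) ℂ} (hE : E.PosSemidef) :
    (tensorFamily (Function.update N i E)).PosSemidef :=
  posSemidef_tensorFamily fun j => by
    rcases eq_or_ne j i with rfl | hj
    · rwa [Function.update_self]
    · rw [Function.update_of_ne hj]; exact hN j

lemma traceNorm_tensorFamily_update_le {τ : ∀ i, Matrix (A i) (A i) ℂ}
    (hτ : ∀ i, IsState (τ i)) (i : Fin l) {D : Matrix (A i) (A i) ℂ} (hD : D.IsHermitian) :
    traceNorm (tensorFamily (Function.update τ i D)) ≤ traceNorm D := by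
  obtain ⟨P, Q, hP, hQ, rfl, hnorm⟩ := hD.exists_posSemidef_sub
  have hP' := posSemidef_tensorFamily_update (fun j => (hτ j).1) i hP
  have hQ' := posSemidef_tensorFamily_update (fun j => (hτ j).1) i hQ
  have htrace (E : Matrix (A i) (A i) ℂ) :
      (tensorFamily (Function.update τ i E)).trace = E.trace := by
    rw [trace_tensorFamily, Fintype.prod_eq_mul_prod_subtype_ne _ i, Function.update_self,
      Finset.prod_eq_one fun j _ => by rw [Function.update_of_ne j.2, (hτ j).2], mul_one]
  calc traceNorm (tensorFamily (Function.update τ i (P - Q)))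
      = traceNorm (tensorFamily (Function.update τ i P) +
          -tensorFamily (Function.update τ i Q)) := by
        rw [tensorFamily_update_sub, sub_eq_add_neg]
    _ ≤ traceNorm (tensorFamily (Function.update τ i P)) +
          traceNorm (-tensorFamily (Function.update τ i Q)) :=
        hP'.1.traceNorm_add_le hQ'.1.neg
    _ = traceNorm (P - Q) := by
        rw [traceNorm_neg, hP'.traceNorm_eq, hQ'.traceNorm_eq, htrace, htrace, hnorm]

lemma traceNorm_tensorFamily_sub_le {σ τ : ∀ i, Matrix (A i) (A i) ℂ}
    (hσ : ∀ i, IsState (σ i)) (hτ : ∀ i, IsState (τ i)) :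
    traceNorm (tensorFamily σ - tensorFamily τ) ≤ ∑ i, traceNorm (σ i - τ i) := by
  have hstate (s : Finset (Fin l)) (i : Fin l) : IsState (s.piecewise τ σ i) :=
    s.piecewise_cases τ σ IsState (hτ i) (hσ i)
  have hherm (s : Finset (Fin l)) : (tensorFamily (s.piecewise τ σ)).IsHermitian :=
    (posSemidef_tensorFamily fun j => (hstate s j).1).1
  -- hybrid argument: replace the factors of `σ` by those of `τ` one at a time
  suffices ∀ s : Finset (Fin l),
      traceNorm (tensorFamily σ - tensorFamily (s.piecewise τ σ)) ≤
        ∑ i ∈ s, traceNorm (σ i - τ i) by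
    simpa using this Finset.univ
  intro s
  induction s using Finset.induction_on with
  | empty => simp [traceNorm_zero]
  | insert i s hi ih =>
    have hσi : s.piecewise τ σ i = σ i := s.piecewise_eq_of_notMem _ _ hi
    have hstep : tensorFamily (s.piecewise τ σ) - tensorFamily ((insert i s).piecewise τ σ) =
        tensorFamily (Function.update (s.piecewise τ σ) i (σ i - τ i)) := by
      rw [Finset.piecewise_insert, tensorFamily_update_sub, ← hσi, Function.update_eq_self]
    calc traceNorm (tensorFamily σ - tensorFamily ((insert i s).piecewise τ σ))
        = traceNorm ((tensorFamily σ - tensorFamily (s.piecewise τ σ)) +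
            (tensorFamily (s.piecewise τ σ) - tensorFamily ((insert i s).piecewise τ σ))) := by
          rw [sub_add_sub_cancel]
      _ ≤ traceNorm (tensorFamily σ - tensorFamily (s.piecewise τ σ)) +
            traceNorm (tensorFamily (Function.update (s.piecewise τ σ) i (σ i - τ i))) := by
          rw [← hstep]
          exact ((posSemidef_tensorFamily fun j => (hσ j).1).1.sub (hherm s)).traceNorm_add_le
            ((hherm s).sub (hherm _))
      _ ≤ ∑ j ∈ s, traceNorm (σ j - τ j) + traceNorm (σ i - τ i) :=
          add_le_add ih
            (traceNorm_tensorFamily_update_le (hstate s) i ((hσ i).1.1.sub (hτ i).1.1))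
      _ = ∑ j ∈ insert i s, traceNorm (σ j - τ j) := by rw [Finset.sum_insert hi, add_comm]

end TensorFamily

section PartialTrace

variable {l : ℕ} {A : Fin l → Type*}

lemma insertAt_self (i : Fin l) (a : A i) (w : ∀ j : {j // j ≠ i}, A j) :
    insertAt i a w i = a := by
  simp [insertAt]

lemma insertAt_of_ne (i : Fin l) (a : A i) (w : ∀ j : {j // j ≠ i}, A j)
    (j : {j // j ≠ i}) : insertAt i a w j = w j := by
  simp [insertAt, j.2]

lemma piSplitAt_symm_apply_eq_insertAt (i : Fin l) (a : A i) (w : ∀ j : {j // j ≠ i}, A j) :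
    (Equiv.piSplitAt i A).symm (a, w) = insertAt i a w := by
  funext j
  by_cases h : j = i
  · subst h; simp [Equiv.piSplitAt, insertAt]
  · simp [Equiv.piSplitAt, insertAt, h]

variable [∀ i, Fintype (A i)]

lemma sum_eq_sum_insertAt {M : Type*} [AddCommMonoid M] (i : Fin l) (f : (∀ j, A j) → M) :
    ∑ x, f x = ∑ a : A i, ∑ w : ∀ j : {j // j ≠ i}, A j, f (insertAt i a w) := by
  rw [← (Equiv.piSplitAt i A).symm.sum_comp, Fintype.sum_prod_type]
  simp only [piSplitAt_symm_apply_eq_insertAt]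

variable [∀ i, DecidableEq (A i)]

lemma ptraceAt_eq_sum_submatrix (i : Fin l) (X : Matrix (∀ j, A j) (∀ j, A j) ℂ) :
    ptraceAt i X = ∑ w, X.submatrix (insertAt i · w) (insertAt i · w) := by
  ext a a'
  simp [ptraceAt, Matrix.sum_apply]

lemma ptraceAt_sub (i : Fin l) (X Y : Matrix (∀ j, A j) (∀ j, A j) ℂ) :
    ptraceAt i (X - Y) = ptraceAt i X - ptraceAt i Y := by
  ext a a'
  simp [ptraceAt, Finset.sum_sub_distrib]

lemma trace_ptraceAt (i : Fin l) (X : Matrix (∀ j, A j) (∀ j, A j) ℂ) :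
    (ptraceAt i X).trace = X.trace := by
  simp only [trace, diag_apply, ptraceAt, of_apply]
  exact (sum_eq_sum_insertAt i fun x => X x x).symm

lemma isHermitian_ptraceAt {X : Matrix (∀ j, A j) (∀ j, A j) ℂ} (hX : X.IsHermitian)
    (i : Fin l) : (ptraceAt i X).IsHermitian := by
  rw [ptraceAt_eq_sum_submatrix]
  exact isSelfAdjoint_sum _ fun w _ => hX.submatrix _

lemma isState_ptraceAt {ρ : Matrix (∀ j, A j) (∀ j, A j) ℂ} (hρ : IsState ρ) (i : Fin l) :
    IsState (ptraceAt i ρ) := by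
  refine ⟨?_, (trace_ptraceAt i ρ).trans hρ.2⟩
  rw [ptraceAt_eq_sum_submatrix]
  exact posSemidef_sum _ fun w _ => hρ.1.submatrix _

lemma ptraceAt_tensorFamily (i : Fin l) (N : ∀ j, Matrix (A j) (A j) ℂ) :
    ptraceAt i (tensorFamily N) = (∏ j : {j // j ≠ i}, (N j).trace) • N i := by
  ext a a'
  have hsplit (w : ∀ j : {j // j ≠ i}, A j) :
      tensorFamily N (insertAt i a w) (insertAt i a' w) =
        N i a a' * ∏ j : {j // j ≠ i}, N j (w j) (w j) := by
    rw [tensorFamily, of_apply, Fintype.prod_eq_mul_prod_subtype_ne _ i, insertAt_self,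
      insertAt_self]
    simp only [insertAt_of_ne]
  simp only [ptraceAt, of_apply, hsplit, ← Finset.mul_sum, Matrix.smul_apply, smul_eq_mul, trace,
    diag_apply, Finset.prod_univ_sum, Fintype.piFinset_univ, mul_comm]

lemma trace_tensorFamily_update_one_mul (i : Fin l) (S : Matrix (A i) (A i) ℂ)
    (X : Matrix (∀ j, A j) (∀ j, A j) ℂ) :
    (tensorFamily (Function.update 1 i S) * X).trace = (S * ptraceAt i X).trace := by
  have hT (a a' : A i) (w w' : ∀ j : {j // j ≠ i}, A j) :
      tensorFamily (Function.update 1 i S) (insertAt i a w) (insertAt i a' w') =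
        S a a' * if w = w' then 1 else 0 := by
    simp only [tensorFamily_update_apply, insertAt_self, insertAt_of_ne, Pi.one_apply,
      one_apply, Finset.prod_boole, Finset.mem_univ, forall_const, funext_iff]
  simp only [trace, diag_apply, mul_apply, ptraceAt, of_apply]
  rw [sum_eq_sum_insertAt i]
  simp only [sum_eq_sum_insertAt i (fun y => _ * X y _), hT]
  refine Finset.sum_congr rfl fun a _ => ?_
  rw [Finset.sum_comm]
  refine Finset.sum_congr rfl fun a' _ => ?_
  simp [mul_ite, ite_mul, Finset.mul_sum]

lemma traceNorm_ptraceAt_le {X : Matrix (∀ j, A j) (∀ j, A j) ℂ} (hX : X.IsHermitian)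
    (i : Fin l) : traceNorm (ptraceAt i X) ≤ traceNorm X := by
  obtain ⟨S, hS₁, hS₂, hS⟩ := (isHermitian_ptraceAt hX i).exists_re_trace_mul_eq_traceNorm
  have hone :
      (1 : Matrix (∀ j, A j) (∀ j, A j) ℂ) = tensorFamily (Function.update 1 i 1) := by
    rw [Function.update_eq_self_iff.mpr (Pi.one_apply i).symm, tensorFamily_one]
  rw [← hS, ← trace_tensorFamily_update_one_mul]
  refine hX.re_trace_mul_le_traceNorm ?_ ?_
  · rw [hone, ← tensorFamily_update_sub]
    exact posSemidef_tensorFamily_update (fun _ => PosSemidef.one) i hS₁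
  · rw [hone, ← tensorFamily_update_add]
    exact posSemidef_tensorFamily_update (fun _ => PosSemidef.one) i hS₂

end PartialTrace

/-- If a state `ρ` on `H_{A₁} ⊗ ⋯ ⊗ H_{A_l}` satisfies
`‖ρ − σ₁ ⊗ ⋯ ⊗ σ_l‖₁ ≤ α` for some states `σ_i`, then
`‖ρ − ρ_{A₁} ⊗ ⋯ ⊗ ρ_{A_l}‖₁ ≤ (l+1)α` where `ρ_{A_i}` are the reduced states of `ρ`. -/
theorem stmt8 {l : ℕ} {A : Fin l → Type*} [∀ i, Fintype (A i)] [∀ i, DecidableEq (A i)]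
    (ρ : Matrix (∀ i, A i) (∀ i, A i) ℂ) (hρ : IsState ρ)
    (σ : ∀ i, Matrix (A i) (A i) ℂ) (hσ : ∀ i, IsState (σ i))
    (α : ℝ) (h : traceNorm (ρ - tensorFamily σ) ≤ α) :
    traceNorm (ρ - tensorFamily (fun i => ptraceAt i ρ)) ≤ ((l : ℝ) + 1) * α := by
  have hσ_herm := (posSemidef_tensorFamily fun i => (hσ i).1).1
  have hmarginal (i : Fin l) : traceNorm (σ i - ptraceAt i ρ) ≤ α :=
    calc traceNorm (σ i - ptraceAt i ρ)
        = traceNorm (-ptraceAt i (ρ - tensorFamily σ)) := by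
          simp [ptraceAt_sub, ptraceAt_tensorFamily, (hσ _).2]
      _ ≤ traceNorm (ρ - tensorFamily σ) := by
          rw [traceNorm_neg]; exact traceNorm_ptraceAt_le (hρ.1.1.sub hσ_herm) i
      _ ≤ α := h
  have hproduct : traceNorm (tensorFamily σ - tensorFamily (ptraceAt · ρ)) ≤ l * α :=
    calc traceNorm (tensorFamily σ - tensorFamily (ptraceAt · ρ))
        ≤ ∑ i, traceNorm (σ i - ptraceAt i ρ) :=
          traceNorm_tensorFamily_sub_le hσ (isState_ptraceAt hρ)
      _ ≤ ∑ _i : Fin l, α := Finset.sum_le_sum fun i _ => hmarginal i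
      _ = l * α := by rw [Finset.sum_const, Finset.card_univ, Fintype.card_fin, nsmul_eq_mul]
  have hρA_herm := (posSemidef_tensorFamily fun i => (isState_ptraceAt hρ i).1).1
  calc traceNorm (ρ - tensorFamily (ptraceAt · ρ))
      = traceNorm ((ρ - tensorFamily σ) + (tensorFamily σ - tensorFamily (ptraceAt · ρ))) := by
        rw [sub_add_sub_cancel]
    _ ≤ α + l * α :=
        ((hρ.1.1.sub hσ_herm).traceNorm_add_le (hσ_herm.sub hρA_herm)).trans
          (add_le_add h hproduct)
    _ = ((l : ℝ) + 1) * α := by ring
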